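/- Let A be a pervasive uniform algebra on a compact Hausdorff space X, and let f ∈ A be nonconstant. Then the closed subalgebra of C(X) generated by A together with the complex conjugate of f equals C(X). -/

import Mathlib

variable {X : Type} [TopologicalSpace X] [CompactSpace X] [T2Space X]

/-- A uniform algebra `A` on `X` is pervasive if for every nonempty proper closed subset
`F` of `X`, the restrictions of elements of `A` to `F` are dense in `C(F, ℂ)`. -/
def Pervasive (A : Subalgebra ℂ C(X, ℂ)) : Prop :=
  ∀ F : Set X, IsClosed F → F.Nonempty → F ≠ Set.univ →
    Dense ((fun f : C(X, ℂ) => f.restrict F) '' (A : Set C(X, ℂ)))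

/-!
The closure `B` of the algebra generated by `A` and `star f` contains `A` and the real-valued
function `u = |f - f x|²`, which is nonconstant. By Weierstrass approximation on the range of `u`,
`B` contains `χ ∘ u` for every continuous `χ : ℝ → ℝ`; choosing `χ` as an Urysohn function for
`(-∞, a]` and `[b, ∞)` with `u x < a < b < u y` gives a partition of unity `w, 1 - w` in `B`
subordinate to the proper closed sets `{u ≤ b}` and `{u ≥ a}`. Pervasiveness approximates any `h`
on each of these sets by elements `g₁, g₂` of `A`, and then `w g₁ + (1 - w) g₂ ∈ B` approximates `h`
on all of `X`.
-/

open ContinuousMap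

theorem ContinuousMap.realToRCLike_comp_mem_of_isClosed {Y 𝕜 : Type*} [TopologicalSpace Y]
    [CompactSpace Y] [RCLike 𝕜] {B : Subalgebra 𝕜 C(Y, 𝕜)} (hB : IsClosed (B : Set C(Y, 𝕜)))
    {u : C(Y, ℝ)} (hu : u.realToRCLike 𝕜 ∈ B) (φ : C(ℝ, ℝ)) :
    (φ.comp u).realToRCLike 𝕜 ∈ B := by
  let s := Set.range u
  have : CompactSpace s := isCompact_iff_compactSpace.mp (isCompact_range u.continuous)
  let uₛ : C(Y, s) := ⟨Set.rangeFactorization u, u.continuous.rangeFactorization⟩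
  let Φ : C(s, ℝ) →ₐ[ℝ] C(Y, 𝕜) :=
    (realToRCLikeStarAlgHom Y 𝕜).toAlgHom.comp (compRightAlgHom ℝ ℝ uₛ)
  have hΦX : Φ (Polynomial.toContinuousMapOnAlgHom s .X) = u.realToRCLike 𝕜 := by
    ext; simp [Φ, uₛ]
  let S : Subalgebra ℝ C(s, ℝ) := (B.restrictScalars ℝ).comap Φ
  have hS : IsClosed (S : Set C(s, ℝ)) :=
    hB.preimage ((continuous_realToRCLike Y 𝕜).comp (continuous_precomp uₛ))
  have hpoly : polynomialFunctions s ≤ S := by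
    rw [polynomialFunctions.eq_adjoin_X, Algebra.adjoin_le_iff, Set.singleton_subset_iff]
    exact (Subalgebra.mem_comap _ _ _).2 (hΦX ▸ hu)
  have hS_top : S = ⊤ := top_unique <|
    polynomialFunctions.topologicalClosure s ▸ Subalgebra.topologicalClosure_minimal hpoly hS
  exact (Subalgebra.mem_comap _ _ _).1 (hS_top ▸ Algebra.mem_top : φ.restrict s ∈ S)

theorem RCLike.norm_ofReal_mul_add_one_sub_mul_le {𝕜 : Type*} [RCLike 𝕜] {c ε : ℝ}
    (hc : c ∈ Set.Icc 0 1) {a b : 𝕜} (ha : c ≠ 0 → ‖a‖ ≤ ε) (hb : c ≠ 1 → ‖b‖ ≤ ε) :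
    ‖(c : 𝕜) * a + (1 - c) * b‖ ≤ ε := by
  obtain ⟨hc₀, hc₁⟩ := hc
  have hca : c * ‖a‖ ≤ c * ε := by
    rcases eq_or_ne c 0 with rfl | h
    · simp
    · exact mul_le_mul_of_nonneg_left (ha h) hc₀
  have hcb : (1 - c) * ‖b‖ ≤ (1 - c) * ε := by
    rcases eq_or_ne c 1 with rfl | h
    · simp
    · exact mul_le_mul_of_nonneg_left (hb h) (sub_nonneg.2 hc₁)
  calc ‖(c : 𝕜) * a + (1 - c) * b‖ ≤ c * ‖a‖ + (1 - c) * ‖b‖ := by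
        refine (norm_add_le _ _).trans (add_le_add ?_ ?_)
        · rw [norm_mul, RCLike.norm_of_nonneg hc₀]
        · rw [← RCLike.ofReal_one, ← RCLike.ofReal_sub, norm_mul,
            RCLike.norm_of_nonneg (sub_nonneg.2 hc₁)]
    _ ≤ c * ε + (1 - c) * ε := add_le_add hca hcb
    _ = ε := by ring

section

variable {Y : Type} [TopologicalSpace Y] [CompactSpace Y] {A B : Subalgebra ℂ C(Y, ℂ)}

theorem Pervasive.exists_forall_dist_lt (hA : Pervasive A) {F : Set Y} (hF : IsClosed F)
    (hF₀ : F.Nonempty) (hF₁ : F ≠ Set.univ) (h : C(Y, ℂ)) {ε : ℝ} (hε : 0 < ε) :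
    ∃ g ∈ A, ∀ z ∈ F, dist (h z) (g z) < ε := by
  have : CompactSpace F := isCompact_iff_compactSpace.mp hF.isCompact
  obtain ⟨-, ⟨g, hgA, rfl⟩, hg⟩ :=
    Metric.mem_closure_iff.1 (hA F hF hF₀ hF₁ (h.restrict F)) ε hε
  exact ⟨g, hgA, fun z hz => (dist_apply_le_dist (⟨z, hz⟩ : F)).trans_lt hg⟩

theorem Pervasive.mem_closure_of_partition (hA : Pervasive A) (hAB : A ≤ B) {w : C(Y, ℝ)}
    (hwB : w.realToRCLike ℂ ∈ B) (hw : ∀ z, w z ∈ Set.Icc 0 1) {F G : Set Y}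
    (hF : IsClosed F) (hF₀ : F.Nonempty) (hF₁ : F ≠ Set.univ)
    (hG : IsClosed G) (hG₀ : G.Nonempty) (hG₁ : G ≠ Set.univ)
    (hwF : ∀ z, w z ≠ 0 → z ∈ F) (hwG : ∀ z, w z ≠ 1 → z ∈ G) (h : C(Y, ℂ)) :
    h ∈ closure (B : Set C(Y, ℂ)) := by
  refine Metric.mem_closure_iff.2 fun ε hε => ?_
  obtain ⟨g₁, hg₁A, hg₁⟩ := hA.exists_forall_dist_lt hF hF₀ hF₁ h (half_pos hε)
  obtain ⟨g₂, hg₂A, hg₂⟩ := hA.exists_forall_dist_lt hG hG₀ hG₁ h (half_pos hε)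
  let w' := w.realToRCLike ℂ
  refine ⟨w' * g₁ + (1 - w') * g₂,
    add_mem (mul_mem hwB (hAB hg₁A)) (mul_mem (sub_mem (one_mem B) hwB) (hAB hg₂A)), ?_⟩
  refine lt_of_le_of_lt ((dist_le (half_pos hε).le).2 fun z => ?_) (half_lt_self hε)
  have key : h z - (w' * g₁ + (1 - w') * g₂) z
      = (w z : ℂ) * (h z - g₁ z) + (1 - w z) * (h z - g₂ z) := by
    simp only [w', ContinuousMap.add_apply, ContinuousMap.mul_apply, ContinuousMap.sub_apply,
      ContinuousMap.one_apply, realToRCLike_apply, RCLike.ofReal_eq_complex_ofReal]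
    ring
  rw [dist_eq_norm, key]
  exact RCLike.norm_ofReal_mul_add_one_sub_mul_le (hw z)
    (fun hz => (dist_eq_norm (h z) (g₁ z) ▸ hg₁ z (hwF z hz)).le)
    (fun hz => (dist_eq_norm (h z) (g₂ z) ▸ hg₂ z (hwG z hz)).le)

theorem Pervasive.eq_top_of_le_of_realToRCLike_mem (hA : Pervasive A) (hAB : A ≤ B)
    (hB : IsClosed (B : Set C(Y, ℂ))) {u : C(Y, ℝ)} (hu : u.realToRCLike ℂ ∈ B) {x y : Y}
    (hxy : u x < u y) : B = ⊤ := by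
  obtain ⟨a, hxa, hay⟩ := exists_between hxy
  obtain ⟨b, hab, hby⟩ := exists_between hay
  obtain ⟨χ, hχb, hχa, hχ⟩ := exists_continuous_zero_one_of_isClosed isClosed_Ici isClosed_Iic
    (Set.Ici_disjoint_Iic.2 hab.not_ge)
  have hwF : ∀ z, χ (u z) ≠ 0 → z ∈ u ⁻¹' Set.Iic b := fun z hz =>
    show u z ≤ b from not_lt.1 fun h => hz (hχb h.le)
  have hwG : ∀ z, χ (u z) ≠ 1 → z ∈ u ⁻¹' Set.Ici a := fun z hz =>
    show a ≤ u z from not_lt.1 fun h => hz (hχa h.le)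
  refine Algebra.eq_top_iff.2 fun h => hB.closure_subset <|
    hA.mem_closure_of_partition hAB (realToRCLike_comp_mem_of_isClosed hB hu χ) (fun z => hχ _)
      (isClosed_Iic.preimage u.continuous) ⟨x, hxa.le.trans hab.le⟩ ?_
      (isClosed_Ici.preimage u.continuous) ⟨y, hay.le⟩ ?_ hwF hwG h
  · exact fun hF => (hby.not_ge (hF ▸ Set.mem_univ y : y ∈ u ⁻¹' Set.Iic b))
  · exact fun hG => (hxa.not_ge (hG ▸ Set.mem_univ x : x ∈ u ⁻¹' Set.Ici a))

end

theorem stmt_4 (A : Subalgebra ℂ C(X, ℂ))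
    (hperv : Pervasive A)
    (f : C(X, ℂ)) (hf : f ∈ A) (hfnc : ∃ x y : X, f x ≠ f y) :
    (Algebra.adjoin ℂ (insert (star f) (A : Set C(X, ℂ)))).topologicalClosure = ⊤ := by
  obtain ⟨x, y, hxy⟩ := hfnc
  set B := (Algebra.adjoin ℂ (insert (star f) (A : Set C(X, ℂ)))).topologicalClosure
  have hAB : A ≤ B := fun g hg =>
    Subalgebra.le_topologicalClosure _ (Algebra.subset_adjoin (Set.mem_insert_of_mem _ hg))
  have hstar : star f ∈ B :=
    Subalgebra.le_topologicalClosure _ (Algebra.subset_adjoin (Set.mem_insert _ _))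
  let g := f - algebraMap ℂ C(X, ℂ) (f x)
  let u : C(X, ℝ) := ⟨fun z => ‖g z‖ ^ 2, by fun_prop⟩
  have hu : u.realToRCLike ℂ = g * star g := by
    ext z
    simp [u, RCLike.mul_conj]
  have hgB : g ∈ B := sub_mem (hAB hf) (algebraMap_mem _ _)
  have hstar_gB : star g ∈ B := by
    rw [star_sub, ← algebraMap_star_comm]
    exact sub_mem hstar (algebraMap_mem _ _)
  have hu_lt : u x < u y := by
    simpa [u, g] using pow_pos (norm_pos_iff.2 (sub_ne_zero.2 hxy.symm)) 2
  exact hperv.eq_top_of_le_of_realToRCLike_mem hAB (Subalgebra.isClosed_topologicalClosure _)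
    (hu ▸ mul_mem hgB hstar_gB) hu_lt
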